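/- arXiv:2008.00747 — 2 statements merged into one kernel-verified Lean document; each statement's English description precedes it below -/
import Mathlib

section
/- Let d ≥ 1 and let k : ℝ^d × ℝ^d → ℝ be measurable and integrally strictly positive definite, i.e. for every measurable h : ℝ^d → ℝ with 0 < ∫ h(x)² dx < ∞ and with (x,x') ↦ h(x)k(x,x')h(x') integrable on ℝ^d × ℝ^d, one has ∫∫ h(x)k(x,x')h(x') dx dx' > 0. Let p and p₀ be continuously differentiable, everywhere strictly positive probability density functions on ℝ^d, and set δ(x) = ∇log p₀(x) − ∇log p(x). Assume each component of x ↦ p(x)δᵢ(x) is square-integrable and that for all indices i the function (x,x') ↦ p(x)δᵢ(x) k(x,x') δᵢ(x') p(x') is integrable on ℝ^d × ℝ^d. Define the kernelized Stein discrepancy S(p,p₀) = ∫∫ p(x) δ(x)ᵀ k(x,x') δ(x') p(x') dx dx'. Then S(p,p₀) ≥ 0, and S(p,p₀) = 0 if and only if p = p₀. -/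
/-!
Writing `hᵢ = p δᵢ`, the discrepancy splits as `S = ∑ᵢ ∫∫ hᵢ(x) k(x,x') hᵢ(x')`. By integral
strict positive definiteness each summand is positive unless `hᵢ = 0` a.e., in which case it
vanishes; so `S ≥ 0`, and `S = 0` forces `δ = 0` a.e., hence everywhere by continuity. Then
`log p - log p₀` has zero derivative, so `p = c p₀`, and normalisation gives `c = 1`.
-/

open MeasureTheory Real

section KernelQuadraticForm

variable {X : Type*} [MeasurableSpace X] {μ : Measure X}

def IntegrallyStrictlyPosDef (μ : Measure X) (k : X × X → ℝ) : Prop :=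
  ∀ h : X → ℝ, Measurable h → Integrable (fun x => h x ^ 2) μ →
    0 < ∫ x, h x ^ 2 ∂μ → Integrable (fun z : X × X => h z.1 * k z * h z.2) (μ.prod μ) →
      0 < ∫ z, h z.1 * k z * h z.2 ∂(μ.prod μ)

theorem integral_mul_kernel_mul_eq_zero_of_ae_eq_zero [SFinite μ] {k : X × X → ℝ}
    {h : X → ℝ} (hh : h =ᵐ[μ] 0) : ∫ z, h z.1 * k z * h z.2 ∂(μ.prod μ) = 0 := by
  have hfst : (fun z : X × X => h z.1) =ᵐ[μ.prod μ] 0 :=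
    Measure.quasiMeasurePreserving_fst.ae_eq_comp hh
  rw [integral_eq_zero_of_ae]
  filter_upwards [hfst] with z hz
  simp [show h z.1 = 0 from hz]

namespace IntegrallyStrictlyPosDef

variable {k : X × X → ℝ} {h : X → ℝ}

theorem integral_pos_or_ae_eq_zero (hk : IntegrallyStrictlyPosDef μ k) (hm : Measurable h)
    (hsq : Integrable (fun x => h x ^ 2) μ)
    (hint : Integrable (fun z : X × X => h z.1 * k z * h z.2) (μ.prod μ)) :
    0 < ∫ z, h z.1 * k z * h z.2 ∂(μ.prod μ) ∨ h =ᵐ[μ] 0 := by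
  have hsq_nonneg : 0 ≤ fun x => h x ^ 2 := fun x => sq_nonneg (h x)
  rcases (MeasureTheory.integral_nonneg hsq_nonneg).lt_or_eq with hpos | hzero
  · exact .inl (hk h hm hsq hpos hint)
  · refine .inr ?_
    filter_upwards [(integral_eq_zero_iff_of_nonneg hsq_nonneg hsq).mp
      hzero.symm] with x hx
    exact pow_eq_zero_iff two_ne_zero |>.mp hx

theorem integral_nonneg [SFinite μ] (hk : IntegrallyStrictlyPosDef μ k) (hm : Measurable h)
    (hsq : Integrable (fun x => h x ^ 2) μ)
    (hint : Integrable (fun z : X × X => h z.1 * k z * h z.2) (μ.prod μ)) :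
    0 ≤ ∫ z, h z.1 * k z * h z.2 ∂(μ.prod μ) := by
  rcases hk.integral_pos_or_ae_eq_zero hm hsq hint with hpos | hzero
  · exact hpos.le
  · exact (integral_mul_kernel_mul_eq_zero_of_ae_eq_zero hzero).ge

theorem ae_eq_zero_of_integral_eq_zero (hk : IntegrallyStrictlyPosDef μ k) (hm : Measurable h)
    (hsq : Integrable (fun x => h x ^ 2) μ)
    (hint : Integrable (fun z : X × X => h z.1 * k z * h z.2) (μ.prod μ))
    (h0 : ∫ z, h z.1 * k z * h z.2 ∂(μ.prod μ) = 0) :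
    h =ᵐ[μ] 0 :=
  (hk.integral_pos_or_ae_eq_zero hm hsq hint).resolve_left h0.not_gt

end IntegrallyStrictlyPosDef

theorem integral_mul_sum_mul_kernel_mul {ι : Type*} [Fintype ι] {ν : Measure (X × X)}
    {k : X × X → ℝ} {p : X → ℝ} {δ : X → ι → ℝ}
    (hint : ∀ i, Integrable (fun z : X × X => p z.1 * δ z.1 i * k z * (p z.2 * δ z.2 i)) ν) :
    ∫ z, p z.1 * (∑ i, δ z.1 i * δ z.2 i) * k z * p z.2 ∂ν =
      ∑ i, ∫ z, p z.1 * δ z.1 i * k z * (p z.2 * δ z.2 i) ∂ν := by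
  rw [← integral_finsetSum _ fun i _ => hint i]
  congr 1 with z
  simp only [Finset.mul_sum, Finset.sum_mul]
  exact Finset.sum_congr rfl fun i _ => by ring

end KernelQuadraticForm

theorem eq_zero_of_mul_ae_eq_zero {X : Type*} [TopologicalSpace X] [MeasurableSpace X]
    {μ : Measure X} [μ.IsOpenPosMeasure] {f g : X → ℝ} (hf : Continuous f)
    (hg : ∀ x, g x ≠ 0)
    (hgf : (fun x => g x * f x) =ᵐ[μ] 0) : f = 0 := by
  refine (hf.ae_eq_iff_eq μ continuous_const).mp ?_
  filter_upwards [hgf] with x hx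
  exact (mul_eq_zero.mp hx).resolve_left (hg x)

section Gradient

variable {E : Type*} [NormedAddCommGroup E] [InnerProductSpace ℝ E] [CompleteSpace E]

theorem ContDiff.continuous_gradient {f : E → ℝ} (hf : ContDiff ℝ 1 f) :
    Continuous (gradient f) :=
  (InnerProductSpace.toDual ℝ E).symm.continuous.comp (hf.continuous_fderiv one_ne_zero)

theorem eq_of_gradient_log_eq [MeasurableSpace E] {μ : Measure E} {p q : E → ℝ}
    (hp : Differentiable ℝ p) (hq : Differentiable ℝ q)
    (hp_pos : ∀ x, 0 < p x) (hq_pos : ∀ x, 0 < q x)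
    (hgrad : ∀ x, gradient (fun y => log (p y)) x = gradient (fun y => log (q y)) x)
    (hpq : ∫ x, p x ∂μ = ∫ x, q x ∂μ) (hq_int : ∫ x, q x ∂μ ≠ 0) : p = q := by
  have hlp : Differentiable ℝ fun y => log (p y) := hp.log fun x => (hp_pos x).ne'
  have hlq : Differentiable ℝ fun y => log (q y) := hq.log fun x => (hq_pos x).ne'
  have hconst : ∀ x, log (p x) - log (q x) = log (p 0) - log (q 0) := by
    refine fun x => is_const_of_fderiv_eq_zero (hlp.fun_sub hlq) (fun y => ?_) x 0
    rw [fderiv_fun_sub (hlp y) (hlq y), ← toDual_gradient, ← toDual_gradient, hgrad, sub_self]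
  set c := log (p 0) - log (q 0)
  have hpc : ∀ x, p x = exp c * q x := fun x => by
    rw [← hconst x, exp_sub, exp_log (hp_pos x), exp_log (hq_pos x),
      div_mul_cancel₀ _ (hq_pos x).ne']
  have hc : exp c = 1 := by
    rw [integral_congr_ae (ae_of_all μ hpc), integral_const_mul] at hpq
    exact (mul_eq_right₀ hq_int).mp hpq
  funext x
  rw [hpc x, hc, one_mul]

end Gradient

theorem stmt_0_general (d : ℕ)
    (k : EuclideanSpace ℝ (Fin d) × EuclideanSpace ℝ (Fin d) → ℝ)
    (hk_ispd : ∀ h : EuclideanSpace ℝ (Fin d) → ℝ, Measurable h →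
      Integrable (fun x => (h x) ^ 2) → (0 < ∫ x, (h x) ^ 2) →
      Integrable (fun z : EuclideanSpace ℝ (Fin d) × EuclideanSpace ℝ (Fin d) =>
        h z.1 * k z * h z.2) →
      0 < ∫ z : EuclideanSpace ℝ (Fin d) × EuclideanSpace ℝ (Fin d), h z.1 * k z * h z.2)
    (p p₀ : EuclideanSpace ℝ (Fin d) → ℝ)
    (hp_smooth : ContDiff ℝ 1 p) (hp₀_smooth : ContDiff ℝ 1 p₀)
    (hp_pos : ∀ x, 0 < p x) (hp₀_pos : ∀ x, 0 < p₀ x)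
    (hp_prob : ∫ x, p x = 1) (hp₀_prob : ∫ x, p₀ x = 1)
    (δ : EuclideanSpace ℝ (Fin d) → EuclideanSpace ℝ (Fin d))
    (hδ : ∀ x, δ x = gradient (fun y => Real.log (p₀ y)) x
        - gradient (fun y => Real.log (p y)) x)
    (hδ_sq : ∀ i : Fin d, Integrable (fun x => (p x * δ x i) ^ 2))
    (hδ_int : ∀ i : Fin d,
      Integrable (fun z : EuclideanSpace ℝ (Fin d) × EuclideanSpace ℝ (Fin d) =>
        (p z.1 * δ z.1 i) * k z * (δ z.2 i * p z.2)))
    (S : ℝ)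
    (hS : S = ∫ z : EuclideanSpace ℝ (Fin d) × EuclideanSpace ℝ (Fin d),
        p z.1 * (∑ i : Fin d, δ z.1 i * δ z.2 i) * k z * p z.2) :
    0 ≤ S ∧ (S = 0 ↔ p = p₀) := by
  have hk : IntegrallyStrictlyPosDef volume k := hk_ispd
  have hδ_cont : Continuous δ := by
    rw [funext hδ]
    exact (hp₀_smooth.log fun x => (hp₀_pos x).ne').continuous_gradient.sub
      (hp_smooth.log fun x => (hp_pos x).ne').continuous_gradient
  set h : Fin d → EuclideanSpace ℝ (Fin d) → ℝ := fun i x => p x * δ x i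
  have hh_meas : ∀ i, Measurable (h i) := fun i =>
    (hp_smooth.continuous.mul ((PiLp.continuous_apply 2 _ i).comp hδ_cont)).measurable
  have hint : ∀ i, Integrable fun z : EuclideanSpace ℝ (Fin d) × EuclideanSpace ℝ (Fin d) =>
      h i z.1 * k z * h i z.2 := fun i => by
    simpa only [mul_comm (δ _ i)] using hδ_int i
  have hS_sum : S = ∑ i, ∫ z, h i z.1 * k z * h i z.2 :=
    hS.trans (integral_mul_sum_mul_kernel_mul (p := p) (δ := fun x => (δ x).ofLp) hint)
  have hterm_nonneg : ∀ i, 0 ≤ ∫ z, h i z.1 * k z * h i z.2 := fun i =>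
    hk.integral_nonneg (hh_meas i) (hδ_sq i) (hint i)
  refine ⟨hS_sum ▸ Finset.sum_nonneg fun i _ => hterm_nonneg i, fun hS0 => ?_, fun hpp => ?_⟩
  · have hδ_zero : ∀ x, δ x = 0 := fun x => by
      ext i
      have hterm : ∫ z, h i z.1 * k z * h i z.2 = 0 :=
        (Finset.sum_eq_zero_iff_of_nonneg fun i _ => hterm_nonneg i).mp (hS_sum ▸ hS0) i
          (Finset.mem_univ i)
      exact congrFun (eq_zero_of_mul_ae_eq_zero ((PiLp.continuous_apply 2 _ i).comp hδ_cont)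
        (fun x => (hp_pos x).ne')
        (hk.ae_eq_zero_of_integral_eq_zero (hh_meas i) (hδ_sq i) (hint i) hterm)) x
    refine eq_of_gradient_log_eq (μ := volume) (hp_smooth.differentiable one_ne_zero)
      (hp₀_smooth.differentiable one_ne_zero) hp_pos hp₀_pos (fun x => ?_)
      (hp_prob.trans hp₀_prob.symm) (hp₀_prob ▸ one_ne_zero)
    exact (sub_eq_zero.mp ((hδ x).symm.trans (hδ_zero x))).symm
  · simp [hS, hδ, hpp]

/-- Nonnegativity and discriminating power of the kernelized Stein discrepancy. -/
theorem stmt_0 (d : ℕ) (hd : 1 ≤ d)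
    (k : EuclideanSpace ℝ (Fin d) × EuclideanSpace ℝ (Fin d) → ℝ)
    (hk_meas : Measurable k)
    (hk_ispd : ∀ h : EuclideanSpace ℝ (Fin d) → ℝ, Measurable h →
      Integrable (fun x => (h x) ^ 2) → (0 < ∫ x, (h x) ^ 2) →
      Integrable (fun z : EuclideanSpace ℝ (Fin d) × EuclideanSpace ℝ (Fin d) =>
        h z.1 * k z * h z.2) →
      0 < ∫ z : EuclideanSpace ℝ (Fin d) × EuclideanSpace ℝ (Fin d), h z.1 * k z * h z.2)
    (p p₀ : EuclideanSpace ℝ (Fin d) → ℝ)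
    (hp_smooth : ContDiff ℝ 1 p) (hp₀_smooth : ContDiff ℝ 1 p₀)
    (hp_pos : ∀ x, 0 < p x) (hp₀_pos : ∀ x, 0 < p₀ x)
    (hp_prob : ∫ x, p x = 1) (hp₀_prob : ∫ x, p₀ x = 1)
    (δ : EuclideanSpace ℝ (Fin d) → EuclideanSpace ℝ (Fin d))
    (hδ : ∀ x, δ x = gradient (fun y => Real.log (p₀ y)) x
        - gradient (fun y => Real.log (p y)) x)
    (hδ_sq : ∀ i : Fin d, Integrable (fun x => (p x * δ x i) ^ 2))
    (hδ_int : ∀ i : Fin d,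
      Integrable (fun z : EuclideanSpace ℝ (Fin d) × EuclideanSpace ℝ (Fin d) =>
        (p z.1 * δ z.1 i) * k z * (δ z.2 i * p z.2)))
    (S : ℝ)
    (hS : S = ∫ z : EuclideanSpace ℝ (Fin d) × EuclideanSpace ℝ (Fin d),
        p z.1 * (∑ i : Fin d, δ z.1 i * δ z.2 i) * k z * p z.2) :
    0 ≤ S ∧ (S = 0 ↔ p = p₀) :=
  stmt_0_general d k hk_ispd p p₀ hp_smooth hp₀_smooth hp_pos hp₀_pos hp_prob hp₀_prob δ hδ hδ_sq
    hδ_int S hS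
end

section
/- Let d ≥ 1 and let f, p : ℝ^d → ℝ be continuously differentiable functions such that the gradient ∇(f·p) of the product is integrable on ℝ^d (componentwise) and f(x)p(x) → 0 as ‖x‖ → ∞. Then for every coordinate i ∈ {1,…,d}, ∫_{ℝ^d} ∂ᵢ(f(x)p(x)) dx = 0; equivalently ∫_{ℝ^d} ∇(f(x)p(x)) dx = 0. -/
/-!
Fubini along the lines parallel to a direction `v` writes `∫ ∂ᵥh` as an integral over a
transversal hyperplane of `∫_ℝ (d/dt) h(x + t • v) dt`, and each inner integral is
`h(+∞) - h(-∞) = 0`. A linear change of coordinates sending `v` to `(0, 1)`, together with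
uniqueness of Haar measure, reduces the general case to `E' × ℝ` with a product measure.
-/

open MeasureTheory Measure Filter Topology Module

variable {E F : Type*} [NormedAddCommGroup E] [NormedSpace ℝ E]
  [NormedAddCommGroup F] [NormedSpace ℝ F]

lemma HasLineDerivAt.hasDerivAt_prodMk_right {h : E × ℝ → F} {h' : F} {x : E} {t : ℝ}
    (hh : HasLineDerivAt ℝ h h' (x, t) (0, 1)) : HasDerivAt (fun s ↦ h (x, s)) h' t := by
  convert hh.scomp_of_eq t ((hasDerivAt_id t).sub_const t) (by simp) using 1
  · ext s; simp
  · simp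

lemma tendsto_prodMk_cocompact {X Y : Type*} [TopologicalSpace X] [TopologicalSpace Y] (x : X) :
    Tendsto (Prod.mk x) (cocompact Y) (cocompact (X × Y)) := by
  rw [← coprod_cocompact]
  have hsnd : Tendsto (Prod.snd ∘ Prod.mk x) (cocompact Y) (cocompact Y) := tendsto_id
  exact (tendsto_comap_iff.2 hsnd).mono_right le_sup_right

variable [CompleteSpace F]

lemma integral_prod_volume_eq_zero_of_hasLineDerivAt_of_tendsto_cocompact [MeasurableSpace E]
    {μ : Measure E} [SigmaFinite μ] {h h' : E × ℝ → F}
    (hh : ∀ z, HasLineDerivAt ℝ h (h' z) z (0, 1)) (hh' : Integrable h' (μ.prod volume))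
    (hdecay : Tendsto h (cocompact (E × ℝ)) (𝓝 0)) :
    ∫ z, h' z ∂(μ.prod volume) = 0 := by
  rw [integral_prod _ hh']
  refine integral_eq_zero_of_ae ?_
  filter_upwards [hh'.prod_right_ae] with x hx
  have hline : Tendsto (fun t ↦ h (x, t)) (atBot ⊔ atTop) (𝓝 0) := by
    rw [← cocompact_eq_atBot_atTop]
    exact hdecay.comp (tendsto_prodMk_cocompact x)
  simpa using integral_of_hasDerivAt_of_tendsto (fun t ↦ (hh (x, t)).hasDerivAt_prodMk_right) hx
    (hline.mono_left le_sup_left) (hline.mono_left le_sup_right)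

variable [FiniteDimensional ℝ E] [MeasurableSpace E] [BorelSpace E]

lemma integral_eq_zero_of_hasLineDerivAt_snd_of_tendsto_cocompact
    {μ : Measure (E × ℝ)} [IsAddHaarMeasure μ] {h h' : E × ℝ → F}
    (hh : ∀ z, HasLineDerivAt ℝ h (h' z) z (0, 1)) (hh' : Integrable h' μ)
    (hdecay : Tendsto h (cocompact (E × ℝ)) (𝓝 0)) :
    ∫ z, h' z ∂μ = 0 := by
  let ν : Measure E := addHaar
  have hμ : ν.prod volume = addHaarScalarFactor (ν.prod volume) μ • μ :=
    isAddLeftInvariant_eq_smul _ _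
  have hν : μ = addHaarScalarFactor μ (ν.prod volume) • ν.prod volume :=
    isAddLeftInvariant_eq_smul _ _
  have hint : Integrable h' (ν.prod volume) := hμ ▸ hh'.smul_measure_nnreal
  rw [hν, integral_smul_nnreal_measure,
    integral_prod_volume_eq_zero_of_hasLineDerivAt_of_tendsto_cocompact hh hint hdecay, smul_zero]

omit [MeasurableSpace E] [BorelSpace E] in
lemma exists_continuousLinearEquiv_apply_eq_zero_one {v : E} (hv : v ≠ 0) :
    ∃ L : E ≃L[ℝ] (Fin (finrank ℝ E - 1) → ℝ) × ℝ, L v = (0, 1) := by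
  have : Nontrivial E := nontrivial_iff.2 ⟨v, 0, hv⟩
  have hrank : finrank ℝ ((Fin (finrank ℝ E - 1) → ℝ) × ℝ) = finrank ℝ E := by
    simpa using Nat.sub_add_cancel finrank_pos
  let L₀ : E ≃L[ℝ] (Fin (finrank ℝ E - 1) → ℝ) × ℝ := (ContinuousLinearEquiv.ofFinrankEq hrank).symm
  obtain ⟨M, hM⟩ := SeparatingDual.exists_continuousLinearEquiv_apply_eq (R := ℝ)
    (L₀.map_ne_zero_iff.2 hv) (show ((0, 1) : (Fin (finrank ℝ E - 1) → ℝ) × ℝ) ≠ 0 by simp)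
  exact ⟨L₀.trans M, hM⟩

variable {μ : Measure E} [IsAddHaarMeasure μ]

theorem integral_eq_zero_of_hasLineDerivAt_of_tendsto_cocompact {h h' : E → F} {v : E}
    (hh : ∀ x, HasLineDerivAt ℝ h (h' x) x v) (hh' : Integrable h' μ)
    (hdecay : Tendsto h (cocompact E) (𝓝 0)) :
    ∫ x, h' x ∂μ = 0 := by
  rcases eq_or_ne v 0 with rfl | hv
  · simp [fun x ↦ (hh x).unique hasLineDerivAt_zero]
  obtain ⟨L, hL⟩ := exists_continuousLinearEquiv_apply_eq_zero_one hv
  have : (map L μ).IsAddHaarMeasure := L.isAddHaarMeasure_map μ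
  have hemb : MeasurableEmbedding L := L.toHomeomorph.measurableEmbedding
  calc ∫ x, h' x ∂μ = ∫ z, h' (L.symm z) ∂(map L μ) := by simp [hemb.integral_map]
    _ = 0 := by
      refine integral_eq_zero_of_hasLineDerivAt_snd_of_tendsto_cocompact (h := h ∘ L.symm)
        (fun z ↦ ?_) ?_ (hdecay.comp L.symm.toHomeomorph.isClosedEmbedding.tendsto_cocompact)
      · have hz := hh (L.symm z)
        rw [show h = (h ∘ L.symm) ∘ (L : E →ₗ[ℝ] _) by ext; simp] at hz
        simpa [hL] using hz.of_comp
      · simpa [hemb.integrable_map_iff, Function.comp_def] using hh'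

lemma gradient_apply_eq_fderiv_single {ι : Type*} [Fintype ι] [DecidableEq ι]
    (g : EuclideanSpace ℝ ι → ℝ) (x : EuclideanSpace ℝ ι) (i : ι) :
    gradient g x i = fderiv ℝ g x (EuclideanSpace.single i 1) := by
  rw [← inner_gradient_left, EuclideanSpace.inner_single_right]
  simp

theorem stmt_3_general (d : ℕ)
    (f p : EuclideanSpace ℝ (Fin d) → ℝ)
    (hf : ContDiff ℝ 1 f) (hp : ContDiff ℝ 1 p)
    (hint : ∀ i : Fin d, Integrable (fun x => gradient (fun y => f y * p y) x i))
    (hdecay : Tendsto (fun x => f x * p x)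
      (comap (fun x : EuclideanSpace ℝ (Fin d) => ‖x‖) atTop) (nhds 0)) :
    (∀ i : Fin d, ∫ x, gradient (fun y => f y * p y) x i = 0) ∧
    (∫ x, gradient (fun y => f y * p y) x) = 0 := by
  have hdiff : Differentiable ℝ (fun y ↦ f y * p y) := (hf.mul hp).differentiable one_ne_zero
  rw [comap_norm_atTop, Metric.cobounded_eq_cocompact] at hdecay
  have hcoord (i : Fin d) : ∫ x, gradient (fun y ↦ f y * p y) x i = 0 := by
    simp_rw [gradient_apply_eq_fderiv_single] at hint ⊢
    exact integral_eq_zero_of_hasLineDerivAt_of_tendsto_cocompact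
      (fun x ↦ (hdiff x).hasFDerivAt.hasLineDerivAt _) (hint i) hdecay
  refine ⟨hcoord, ?_⟩
  ext i
  simpa [eval_integral_piLp hint] using hcoord i

/-- Sufficient condition for membership in the Stein class: if f·p decays at infinity
and ∇(f·p) is integrable componentwise, then ∫ ∇(f(x)p(x)) dx = 0. -/
theorem stmt_3 (d : ℕ) (hd : 1 ≤ d)
    (f p : EuclideanSpace ℝ (Fin d) → ℝ)
    (hf : ContDiff ℝ 1 f) (hp : ContDiff ℝ 1 p)
    (hint : ∀ i : Fin d, Integrable (fun x => gradient (fun y => f y * p y) x i))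
    (hdecay : Tendsto (fun x => f x * p x)
      (comap (fun x : EuclideanSpace ℝ (Fin d) => ‖x‖) atTop) (nhds 0)) :
    (∀ i : Fin d, ∫ x, gradient (fun y => f y * p y) x i = 0) ∧
    (∫ x, gradient (fun y => f y * p y) x) = 0 :=
  stmt_3_general d f p hf hp hint hdecay
end
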